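/- arXiv:1002.1265 — 5 statements merged into one kernel-verified Lean document; each statement's English description precedes it below -/
import Mathlib

section
/- Let G be a finitely generated group with a fixed finite generating set, equipped with the corresponding word metric, and let H be a subgroup of G. Then the commensurizer of H in G equals the set of all g in G such that the Hausdorff distance between H and the coset gH (as subsets of G with the word metric) is finite. -/
/-- The word length of `g` with respect to a finite generating set `S`:
the least length of a word in `S ∪ S⁻¹` representing `g`. -/
noncomputable def wlen {G : Type*} [Group G] (S : Finset G) (g : G) : ℕ :=
  sInf {n | ∃ l : List G, l.length = n ∧ (∀ x ∈ l, x ∈ S ∨ x⁻¹ ∈ S) ∧ l.prod = g}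

/-- The word metric on `G` with respect to `S`. -/
noncomputable def wdist {G : Type*} [Group G] (S : Finset G) (g h : G) : ℕ :=
  wlen S (g⁻¹ * h)

/-!
`H` acts on `G ⧸ H` by left multiplication and the stabilizer of the coset `gH` is
`H ∩ gHg⁻¹`, so `[H : H ∩ gHg⁻¹]` is the size of the orbit `H • gH`. Balls of the word metric
are finite, hence a set of cosets is finite exactly when all its members meet a common ball;
for the orbit of `gH` this says that `H` lies in a bounded neighbourhood of `gH`. Applying this
to `g` and to `g⁻¹` gives the two halves of the Hausdorff condition.
-/

open Pointwise

section WordMetric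

variable {G : Type*} [Group G] (S : Finset G)

lemma Finset.list_prod_mem_pow {M : Type*} [Monoid M] [DecidableEq M] {s : Finset M}
    {l : List M} (hl : ∀ x ∈ l, x ∈ s) : l.prod ∈ s ^ l.length := by
  induction l with
  | nil => simp
  | cons x l ih =>
    rw [List.prod_cons, List.length_cons, pow_succ']
    exact Finset.mul_mem_mul (hl x List.mem_cons_self)
      (ih fun y hy => hl y (List.mem_cons_of_mem x hy))

lemma exists_word_inv {g : G} {n : ℕ}
    (h : ∃ l : List G, l.length = n ∧ (∀ x ∈ l, x ∈ S ∨ x⁻¹ ∈ S) ∧ l.prod = g) :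
    ∃ l : List G, l.length = n ∧ (∀ x ∈ l, x ∈ S ∨ x⁻¹ ∈ S) ∧ l.prod = g⁻¹ := by
  obtain ⟨l, rfl, hl, rfl⟩ := h
  refine ⟨(l.map (·⁻¹)).reverse, by simp, fun x hx => ?_, (List.prod_inv_reverse l).symm⟩
  have := hl x⁻¹ (by simpa using hx)
  rwa [inv_inv, or_comm] at this

lemma wlen_inv (g : G) : wlen S g⁻¹ = wlen S g := by
  unfold wlen
  congr 1
  ext n
  exact ⟨fun h => by simpa using exists_word_inv S h, exists_word_inv S⟩

lemma wdist_comm (x y : G) : wdist S x y = wdist S y x := by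
  rw [wdist, wdist, ← wlen_inv, mul_inv_rev, inv_inv]

lemma wdist_mul_left (g x y : G) : wdist S (g * x) (g * y) = wdist S x y := by
  rw [wdist, wdist, mul_inv_rev, mul_assoc, inv_mul_cancel_left]

lemma wdist_mul_eq_wdist_inv_mul (g x y : G) : wdist S x (g * y) = wdist S y (g⁻¹ * x) := by
  rw [wdist_comm, ← wdist_mul_left S g⁻¹, inv_mul_cancel_left]

variable {S}

lemma exists_word_length_eq_wlen (hS : Subgroup.closure (S : Set G) = ⊤) (g : G) :
    ∃ l : List G, l.length = wlen S g ∧ (∀ x ∈ l, x ∈ S ∨ x⁻¹ ∈ S) ∧ l.prod = g := by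
  have hg : g ∈ Submonoid.closure ((S : Set G) ∪ (S : Set G)⁻¹) := by
    rw [← Subgroup.closure_toSubmonoid, hS]
    trivial
  obtain ⟨l, hl, rfl⟩ := Submonoid.exists_list_of_mem_closure hg
  exact Nat.sInf_mem (s := {n | ∃ l' : List G, l'.length = n ∧ _ ∧ l'.prod = l.prod})
    ⟨l.length, l, rfl, by simpa using hl, rfl⟩

lemma finite_setOf_wlen_le (hS : Subgroup.closure (S : Set G) = ⊤) (M : ℕ) :
    {g : G | wlen S g ≤ M}.Finite := by
  classical
  refine (Finset.range (M + 1)).biUnion (fun n => (S ∪ S⁻¹) ^ n) |>.finite_toSet.subset ?_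
  intro g hg
  obtain ⟨l, hlen, hl, rfl⟩ := exists_word_length_eq_wlen hS g
  rw [Finset.mem_coe, Finset.mem_biUnion]
  refine ⟨l.length, Finset.mem_range_succ_iff.mpr (hlen ▸ hg), Finset.list_prod_mem_pow ?_⟩
  intro x hx
  simpa [Finset.mem_union, Finset.mem_inv] using hl x hx

end WordMetric

section Commensurator

variable {G : Type*} [Group G] {S : Finset G}

lemma finite_iff_exists_wlen_le_of_surjective {α : Type*} {π : G → α}
    (hπ : Function.Surjective π) (hS : Subgroup.closure (S : Set G) = ⊤) {X : Set α} :
    X.Finite ↔ ∃ M : ℕ, ∀ c ∈ X, ∃ x, π x = c ∧ wlen S x ≤ M := by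
  constructor
  · intro hX
    obtain ⟨M, hM⟩ := (hX.image fun c => wlen S (Function.surjInv hπ c)).bddAbove
    exact ⟨M, fun c hc => ⟨_, Function.surjInv_eq hπ c, hM ⟨c, hc, rfl⟩⟩⟩
  · rintro ⟨M, hM⟩
    refine ((finite_setOf_wlen_le hS M).image π).subset fun c hc => ?_
    obtain ⟨x, rfl, hx⟩ := hM c hc
    exact ⟨x, hx, rfl⟩

lemma stabilizer_coe_eq_subgroupOf (H : Subgroup G) (g : G) :
    MulAction.stabilizer H (g : G ⧸ H) = (ConjAct.toConjAct g • H).subgroupOf H := by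
  ext a
  rw [MulAction.mem_stabilizer_iff, Subgroup.mem_subgroupOf,
    Subgroup.mem_pointwise_smul_iff_inv_smul_mem, ConjAct.smul_def]
  change ((a : G) • (g : G ⧸ H)) = g ↔ _
  rw [MulAction.Quotient.smul_mk, QuotientGroup.eq, ← H.inv_mem_iff]
  simp [mul_assoc]

lemma relIndex_conjAct_smul_eq_ncard_orbit (H : Subgroup G) (g : G) :
    (ConjAct.toConjAct g • H).relIndex H = (MulAction.orbit H (g : G ⧸ H)).ncard := by
  rw [Subgroup.relIndex, ← stabilizer_coe_eq_subgroupOf, MulAction.index_stabilizer]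

lemma forall_mem_orbit_exists_wlen_le_iff (H : Subgroup G) (g : G) (M : ℕ) :
    (∀ c ∈ MulAction.orbit H (g : G ⧸ H), ∃ x : G, (x : G ⧸ H) = c ∧ wlen S x ≤ M) ↔
      ∀ a ∈ H, ∃ h ∈ H, wdist S a (g * h) ≤ M := by
  simp only [MulAction.mem_orbit_iff, forall_exists_index, Subtype.forall]
  constructor
  · intro hX a ha
    obtain ⟨x, hx, hle⟩ := hX _ a⁻¹ (H.inv_mem ha) rfl
    replace hx : (x⁻¹ * (a⁻¹ * g))⁻¹ ∈ H := H.inv_mem (QuotientGroup.eq.mp hx)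
    refine ⟨g⁻¹ * a * x, by simpa [mul_assoc] using hx, ?_⟩
    simpa [wdist, mul_assoc] using hle
  · rintro hH _ a ha rfl
    obtain ⟨h, hh, hle⟩ := hH a⁻¹ (H.inv_mem ha)
    refine ⟨a * (g * h), QuotientGroup.eq.mpr ?_, by simpa [wdist] using hle⟩
    simpa [mul_assoc] using H.inv_mem hh

lemma relIndex_conjAct_smul_ne_zero_iff (hS : Subgroup.closure (S : Set G) = ⊤)
    (H : Subgroup G) (g : G) :
    (ConjAct.toConjAct g • H).relIndex H ≠ 0 ↔
      ∃ M : ℕ, ∀ a ∈ H, ∃ h ∈ H, wdist S a (g * h) ≤ M := by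
  rw [relIndex_conjAct_smul_eq_ncard_orbit]
  have hfinite : (MulAction.orbit H (g : G ⧸ H)).ncard ≠ 0 ↔
      (MulAction.orbit H (g : G ⧸ H)).Finite :=
    ⟨Set.finite_of_ncard_ne_zero, fun h => Set.ncard_ne_zero_of_mem (MulAction.mem_orbit_self _) h⟩
  simp only [hfinite, finite_iff_exists_wlen_le_of_surjective QuotientGroup.mk_surjective hS,
    forall_mem_orbit_exists_wlen_le_iff]

end Commensurator

/-- The commensurizer of a subgroup `H` of a finitely generated group `G` is exactly
the set of `g ∈ G` such that the Hausdorff distance (in the word metric) between `H`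
and the coset `gH` is finite. -/
theorem stmt_0 {G : Type*} [Group G] (S : Finset G)
    (hS : Subgroup.closure (S : Set G) = ⊤) (H : Subgroup G) (g : G) :
    g ∈ Subgroup.Commensurable.commensurator H ↔
      ∃ M : ℕ,
        (∀ a ∈ H, ∃ h ∈ H, wdist S a (g * h) ≤ M) ∧
        (∀ h ∈ H, ∃ a ∈ H, wdist S a (g * h) ≤ M) := by
  have hinv : H.relIndex (ConjAct.toConjAct g • H) = (ConjAct.toConjAct g⁻¹ • H).relIndex H := by
    rw [← Subgroup.relIndex_pointwise_smul (ConjAct.toConjAct g⁻¹) H, map_inv, inv_smul_smul]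
  simp only [Subgroup.Commensurable.commensurator_mem_iff, Subgroup.Commensurable, hinv,
    relIndex_conjAct_smul_ne_zero_iff hS, ← wdist_mul_eq_wdist_inv_mul]
  constructor
  · rintro ⟨⟨M₁, h₁⟩, ⟨M₂, h₂⟩⟩
    refine ⟨max M₁ M₂, fun a ha => ?_, fun h hh => ?_⟩
    · obtain ⟨h, hh, hle⟩ := h₁ a ha
      exact ⟨h, hh, hle.trans (le_max_left _ _)⟩
    · obtain ⟨a, ha, hle⟩ := h₂ h hh
      exact ⟨a, ha, hle.trans (le_max_right _ _)⟩
  · rintro ⟨M, h₁, h₂⟩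
    exact ⟨⟨M, h₁⟩, ⟨M, h₂⟩⟩
end

section
/- Let F be a free group and let f₁, f₂ ∈ F and k a nonzero integer with f₁^k = f₂^k. Then f₁ = f₂. -/
open Subgroup

/-- In a free group generated by two elements `x, y` with `x ^ k = y ^ k` (`k ≠ 0`),
we have `x = y`. -/
theorem key_aux {G : Type*} [Group G] [IsFreeGroup G] (x y : G) (k : ℤ) (hk : k ≠ 0)
    (hgen : Subgroup.closure ({x, y} : Set G) = ⊤) (h : x ^ k = y ^ k) : x = y := by
  classical
  set S := IsFreeGroup.Generators G with hS
  let φ : G →* Multiplicative (S →₀ ℤ) :=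
    IsFreeGroup.lift (fun s => Multiplicative.ofAdd (Finsupp.single s 1))
  have hφ : ∀ s : S, φ (IsFreeGroup.of s) = Multiplicative.ofAdd (Finsupp.single s 1) :=
    fun s => IsFreeGroup.lift_of _ s
  -- Step 1 : φ x = φ y
  have h1 : φ x = φ y := by
    have := congrArg φ h
    rw [map_zpow, map_zpow] at this
    have h2 : k • (φ x).toAdd = k • (φ y).toAdd := this
    have h3 : (φ x).toAdd = (φ y).toAdd := by
      ext s
      have := congrFun (congrArg Finsupp.toFun h2) s
      exact mul_left_cancel₀ hk this
    exact h3
  -- Step 2 : every φ g is a multiple of v := toAdd (φ x)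
  set v : S →₀ ℤ := (φ x).toAdd with hv
  have step2 : ∀ g : G, ∃ n : ℤ, (φ g).toAdd = n • v := by
    intro g
    have hg : g ∈ Subgroup.closure ({x, y} : Set G) := hgen ▸ Subgroup.mem_top g
    induction hg using Subgroup.closure_induction with
    | mem z hz =>
        rcases hz with rfl | rfl
        · exact ⟨1, (one_smul ℤ v).symm⟩
        · exact ⟨1, by rw [← h1, one_smul]⟩
    | one => exact ⟨0, by simp⟩
    | mul a b ha hb iha ihb =>
        obtain ⟨m, hm⟩ := iha; obtain ⟨n, hn⟩ := ihb
        exact ⟨m + n, by rw [map_mul]; simp [hm, hn, add_smul]⟩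
    | inv a ha iha =>
        obtain ⟨m, hm⟩ := iha
        exact ⟨-m, by rw [map_inv]; simp [hm, neg_smul]⟩
  -- Step 3 : S is a subsingleton
  have hsub : Subsingleton S := by
    constructor
    intro a b
    by_contra hab
    obtain ⟨m, hm⟩ := step2 (IsFreeGroup.of a)
    obtain ⟨n, hn⟩ := step2 (IsFreeGroup.of b)
    rw [hφ] at hm hn
    have hma : (1 : ℤ) = m * v a := by
      have := DFunLike.congr_fun hm a
      simpa using this
    have hmb : (0 : ℤ) = m * v b := by
      have := DFunLike.congr_fun hm b
      simpa [Finsupp.single_apply, hab] using this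
    have hnb : (1 : ℤ) = n * v b := by
      have := DFunLike.congr_fun hn b
      simpa using this
    have hm0 : m ≠ 0 := by rintro rfl; simp at hma
    have hvb : v b = 0 := by
      rcases mul_eq_zero.mp hmb.symm with h' | h'
      · exact absurd h' hm0
      · exact h'
    rw [hvb, mul_zero] at hnb
    exact one_ne_zero hnb
  -- Step 4 : conclude
  have htop : Subgroup.closure (Set.range (IsFreeGroup.of : S → G)) = ⊤ := by
    have : Set.range (IsFreeGroup.of : S → G)
        = (IsFreeGroup.mulEquiv G : FreeGroup S →* G) '' Set.range (FreeGroup.of : S → FreeGroup S) := by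
      rw [← Set.range_comp]
      rfl
    rw [this, ← MonoidHom.map_closure, FreeGroup.closure_range_of]
    exact Subgroup.map_top_of_surjective _ (IsFreeGroup.mulEquiv G).surjective
  rcases isEmpty_or_nonempty S with hE | hne
  · have : Subgroup.closure (Set.range (IsFreeGroup.of : S → G)) = ⊥ := by
      rw [Set.range_eq_empty, Subgroup.closure_empty]
    rw [this] at htop
    have hx : x ∈ (⊥ : Subgroup G) := htop ▸ Subgroup.mem_top x
    have hy : y ∈ (⊥ : Subgroup G) := htop ▸ Subgroup.mem_top y
    rw [Subgroup.mem_bot] at hx hy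
    rw [hx, hy]
  · obtain ⟨s₀⟩ := hne
    set c : G := IsFreeGroup.of s₀ with hc
    have hall : ∀ g : G, ∃ n : ℤ, g = c ^ n := by
      intro g
      have hg : g ∈ Subgroup.closure (Set.range (IsFreeGroup.of : S → G)) :=
        htop ▸ Subgroup.mem_top g
      have : g ∈ Subgroup.zpowers c := by
        refine (Subgroup.closure_le _).mpr ?_ hg
        rintro _ ⟨s, rfl⟩
        have : s = s₀ := Subsingleton.elim s s₀
        rw [this]
        exact Subgroup.mem_zpowers c
      obtain ⟨n, hn⟩ := this
      exact ⟨n, hn.symm⟩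
    obtain ⟨m, hm⟩ := hall x
    obtain ⟨n, hn⟩ := hall y
    have hφc : (φ c).toAdd = Finsupp.single s₀ 1 := by rw [hc, hφ]; rfl
    have : (m : ℤ) = n := by
      have h2 : φ (c ^ m) = φ (c ^ n) := by rw [← hm, ← hn]; exact h1
      rw [map_zpow, map_zpow] at h2
      have h3 : m • (φ c).toAdd = n • (φ c).toAdd := by
        rw [← toAdd_zpow, ← toAdd_zpow, h2]
      rw [hφc] at h3
      have := DFunLike.congr_fun h3 s₀
      simpa using this
    rw [hm, hn, this]

/-- Uniqueness of roots in free groups: if `f₁ᵏ = f₂ᵏ` for a nonzero integer `k`,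
then `f₁ = f₂`. -/
theorem stmt_3 {ι : Type*} (f₁ f₂ : FreeGroup ι) (k : ℤ) (hk : k ≠ 0)
    (h : f₁ ^ k = f₂ ^ k) : f₁ = f₂ := by
  set H := Subgroup.closure ({f₁, f₂} : Set (FreeGroup ι)) with hH
  have h₁ : f₁ ∈ H := Subgroup.subset_closure (by simp)
  have h₂ : f₂ ∈ H := Subgroup.subset_closure (by simp)
  set x : H := ⟨f₁, h₁⟩
  set y : H := ⟨f₂, h₂⟩
  have hgen : Subgroup.closure ({x, y} : Set H) = ⊤ := by
    have := Subgroup.closure_closure_coe_preimage (k := ({f₁, f₂} : Set (FreeGroup ι)))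
    rw [eq_top_iff, ← this]
    apply Subgroup.closure_mono
    rintro ⟨g, hg⟩ hpre
    simp only [Set.mem_preimage, Set.mem_insert_iff, Set.mem_singleton_iff] at hpre ⊢
    rcases hpre with h' | h'
    · left; exact Subtype.ext h'
    · right; exact Subtype.ext h'
  have hxy : x ^ k = y ^ k := by
    ext
    push_cast
    exact h
  have := key_aux x y k hk hgen hxy
  exact congrArg Subtype.val this
end

section
/- Let F be a finitely generated free group with free basis f₁, ..., fₙ, and let α : ℤ → Aut(F) be a homomorphism with infinite image. Then there exists g₀ ∈ F such that α(b)(g₀) ≠ g₀ for every nonzero b ∈ ℤ. -/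
/-- If `α : ℤ → Aut(Fₙ)` is a homomorphism with infinite image, then there is an
element `g₀` of the free group moved by `α(b)` for every nonzero `b`. -/
theorem stmt_5 (n : ℕ) (α : Multiplicative ℤ →* MulAut (FreeGroup (Fin n)))
    (hα : (Set.range ⇑α).Infinite) :
    ∃ g₀ : FreeGroup (Fin n), ∀ b : ℤ, b ≠ 0 → α (Multiplicative.ofAdd b) g₀ ≠ g₀ := by
  by_contra h
  push_neg at h
  choose b hb0 hbfix using h
  set k : ℤ := ∏ i : Fin n, ((b (FreeGroup.of i)).natAbs : ℤ) with hk
  have hkpos : 0 < k := by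
    apply Finset.prod_pos
    intro i _
    exact_mod_cast Int.natAbs_pos.mpr (hb0 (FreeGroup.of i))
  have hfix : ∀ i : Fin n, α (Multiplicative.ofAdd k) (FreeGroup.of i) = FreeGroup.of i := by
    intro i
    have hd : b (FreeGroup.of i) ∣ k := by
      refine Int.natAbs_dvd.mp ?_
      exact Finset.dvd_prod_of_mem (fun j => ((b (FreeGroup.of j)).natAbs : ℤ))
        (Finset.mem_univ i)
    obtain ⟨m, hm⟩ := hd
    have hpow : Multiplicative.ofAdd k = (Multiplicative.ofAdd (b (FreeGroup.of i))) ^ m := by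
      rw [hm, mul_comm]
      rfl
    have hmem : α (Multiplicative.ofAdd (b (FreeGroup.of i))) ∈
        MulAction.stabilizer (MulAut (FreeGroup (Fin n))) (FreeGroup.of i) := by
      simpa [MulAction.mem_stabilizer_iff, MulAut.smul_def] using hbfix (FreeGroup.of i)
    have : α (Multiplicative.ofAdd k) ∈
        MulAction.stabilizer (MulAut (FreeGroup (Fin n))) (FreeGroup.of i) := by
      rw [hpow, map_zpow]
      exact Subgroup.zpow_mem _ hmem m
    simpa [MulAction.mem_stabilizer_iff, MulAut.smul_def] using this
  have hone : α (Multiplicative.ofAdd k) = 1 := by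
    have hhom : (α (Multiplicative.ofAdd k)).toMonoidHom =
        MonoidHom.id (FreeGroup (Fin n)) := by
      apply FreeGroup.ext_hom
      intro a
      simpa using hfix a
    ext x
    have := DFunLike.congr_fun hhom x
    simpa using this
  refine hα ?_
  have hsub : Set.range ⇑α ⊆
      Set.range (fun r : Fin k.toNat => α (Multiplicative.ofAdd ((r : ℕ) : ℤ))) := by
    rintro _ ⟨x, rfl⟩
    set a : ℤ := Multiplicative.toAdd x with ha
    have hx : x = Multiplicative.ofAdd a := rfl
    have hmod : 0 ≤ a % k := Int.emod_nonneg a hkpos.ne'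
    have hlt : a % k < k := Int.emod_lt_of_pos a hkpos
    refine ⟨⟨(a % k).toNat, ?_⟩, ?_⟩
    · omega
    · simp only
      have hcast : (((a % k).toNat : ℕ) : ℤ) = a % k := Int.toNat_of_nonneg hmod
      rw [hcast]
      have hdecomp : a = k * (a / k) + a % k := (Int.mul_ediv_add_emod a k).symm
      have : Multiplicative.ofAdd a =
          (Multiplicative.ofAdd k) ^ (a / k) * Multiplicative.ofAdd (a % k) := by
        rw [← Int.ofAdd_mul, ← ofAdd_add, ← hdecomp]
      rw [hx, this, map_mul, map_zpow, hone, one_zpow, one_mul]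
  exact Set.Finite.subset (Set.finite_range _) hsub
end

section
/- Let F be a finitely generated free group with basis f₁,...,fₙ, let α : ℤ → Aut(F) be a homomorphism, and let G = F ⋊_α ℤ with ℤ = ⟨t⟩. If there exist a nonzero integer k and an element m ∈ F such that α(k) is the inner automorphism x ↦ m x m⁻¹, then the subgroup G_k of G generated by f₁,...,fₙ and t^k is isomorphic to F × ℤ and has finite index (at most k) in G. -/
open SemidirectProduct

/-- The subgroup of `Fₙ ⋊[φ] ℤ` generated by the free basis `f₁, …, fₙ` of `Fₙ`
and by `t^k` (where `t` is the generator of `ℤ`). -/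
noncomputable def Gk (n : ℕ) (φ : Multiplicative ℤ →* MulAut (FreeGroup (Fin n)))
    (k : ℤ) : Subgroup (FreeGroup (Fin n) ⋊[φ] Multiplicative ℤ) :=
  Subgroup.closure
    ((Set.range fun i : Fin n =>
        (inl (FreeGroup.of i) : FreeGroup (Fin n) ⋊[φ] Multiplicative ℤ)) ∪
      {inr (Multiplicative.ofAdd k)})

/-! If `α(k)` is conjugation by `m`, then `c = m⁻¹ t^k` centralises `F`, so `(f, l) ↦ f c^l` is a
homomorphism `F × ℤ → G`; it is injective because `c` maps to `t^k`, of infinite order, in `ℤ`.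
Its image `F ⊔ ⟨c⟩` and `G_k = F ⊔ ⟨t^k⟩` are both the preimage of `kℤ` under `G → ℤ`, which
has index `|k|`. -/

open Subgroup

theorem Subgroup.disjoint_ker_zpowers {P Q : Type*} [Group P] [Group Q] {f : P →* Q} {c : P}
    (hc : ¬IsOfFinOrder (f c)) : Disjoint f.ker (zpowers c) := by
  rw [disjoint_iff_inf_le]
  rintro - ⟨hker, l, rfl⟩
  have hl : f c ^ l = f c ^ (0 : ℤ) := by simpa using hker
  simp [injective_zpow_iff_not_isOfFinOrder.mpr hc hl]

namespace SemidirectProduct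

variable {N G : Type*} [Group N] [Group G] {φ : G →* MulAut N}

theorem commute_inl_inv_mul_inr {g : G} {m : N} (hm : φ g = MulAut.conj m) (f : N) :
    Commute (inl f : N ⋊[φ] G) (inl m⁻¹ * inr g) := by
  have hconj : (inr g * inl f : N ⋊[φ] G) = inl (m * f * m⁻¹) * inr g := by
    ext <;> simp [hm]
  rw [Commute, SemiconjBy, ← mul_assoc, ← map_mul, mul_assoc, hconj, ← mul_assoc, ← map_mul]
  congr 2
  group

theorem range_inl_sup_zpowers (c : N ⋊[φ] G) :
    (inl : N →* N ⋊[φ] G).range ⊔ zpowers c = (zpowers (rightHom c)).comap rightHom := by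
  rw [range_inl_eq_ker_rightHom, ← MonoidHom.map_zpowers, comap_map_eq, sup_comm]

section centralElement

variable (c : N ⋊[φ] G) (hcomm : ∀ f : N, Commute (inl f) c)

noncomputable def inlZPowersHom : N × Multiplicative ℤ →* N ⋊[φ] G :=
  inl.noncommCoprod (zpowersHom _ c) fun f _ => (hcomm f).zpow_right _

theorem range_inlZPowersHom :
    (inlZPowersHom c hcomm).range = (inl : N →* N ⋊[φ] G).range ⊔ zpowers c :=
  MonoidHom.noncommCoprod_range _ _ _

theorem injective_inlZPowersHom (hc : ¬IsOfFinOrder (rightHom c)) :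
    Function.Injective (inlZPowersHom c hcomm) := by
  refine (MonoidHom.noncommCoprod_injective _ _ _).mpr ⟨inl_injective, ?_, ?_⟩
  · exact (injective_zpow_iff_not_isOfFinOrder.mpr fun h => hc (rightHom.isOfFinOrder h)).comp
      Multiplicative.toAdd.injective
  · rw [range_zpowersHom, range_inl_eq_ker_rightHom]
    exact disjoint_ker_zpowers hc

noncomputable def prodMulEquivOfCommute (hc : ¬IsOfFinOrder (rightHom c)) :
    N × Multiplicative ℤ ≃* ((inl : N →* N ⋊[φ] G).range ⊔ zpowers c : Subgroup _) :=
  (MonoidHom.ofInjective (injective_inlZPowersHom c hcomm hc)).trans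
    (MulEquiv.subgroupCongr (range_inlZPowersHom c hcomm))

end centralElement

end SemidirectProduct

section Gk

variable {n : ℕ} {φ : Multiplicative ℤ →* MulAut (FreeGroup (Fin n))} {k : ℤ}

theorem Gk_eq_range_inl_sup_zpowers :
    Gk n φ k = (inl : _ →* FreeGroup (Fin n) ⋊[φ] Multiplicative ℤ).range ⊔
      zpowers (inr (Multiplicative.ofAdd k)) := by
  rw [Gk, Subgroup.closure_union, ← zpowers_eq_closure, MonoidHom.range_eq_map,
    ← FreeGroup.closure_range_of, MonoidHom.map_closure, ← Set.range_comp]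
  rfl

theorem Gk_eq_comap_rightHom :
    Gk n φ k = (zpowers (Multiplicative.ofAdd k)).comap rightHom := by
  rw [Gk_eq_range_inl_sup_zpowers, range_inl_sup_zpowers, rightHom_inr]

theorem index_Gk : (Gk n φ k).index = k.natAbs := by
  rw [Gk_eq_comap_rightHom, index_comap_of_surjective _ rightHom_surjective]
  -- `zpowers (ofAdd k)` is `zmultiples k` read in `Multiplicative ℤ`, definitionally
  exact Int.index_zmultiples k

end Gk

/-- If `α(k)` is the inner automorphism `x ↦ m x m⁻¹` for some nonzero `k` and
`m ∈ Fₙ`, then the subgroup of `Fₙ ⋊_α ℤ` generated by `f₁, …, fₙ` and `t^k` is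
isomorphic to `Fₙ × ℤ` and has finite index, at most `k`. -/
theorem stmt_8 (n : ℕ) (φ : Multiplicative ℤ →* MulAut (FreeGroup (Fin n)))
    (k : ℤ) (hk : k ≠ 0) (m : FreeGroup (Fin n))
    (hm : φ (Multiplicative.ofAdd k) = MulAut.conj m) :
    Nonempty (Gk n φ k ≃* FreeGroup (Fin n) × Multiplicative ℤ) ∧
    0 < (Gk n φ k).index ∧ (Gk n φ k).index ≤ k.natAbs := by
  set c : FreeGroup (Fin n) ⋊[φ] Multiplicative ℤ := inl m⁻¹ * inr (Multiplicative.ofAdd k)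
  have hc : rightHom c = Multiplicative.ofAdd k := by simp [c]
  have hinf : ¬IsOfFinOrder (rightHom c) := by
    rwa [hc, isOfFinOrder_iff_eq_one, ofAdd_eq_one]
  have hG : Gk n φ k = inl.range ⊔ zpowers c := by
    rw [Gk_eq_comap_rightHom, range_inl_sup_zpowers, hc]
  refine ⟨⟨(MulEquiv.subgroupCongr hG).trans
    (prodMulEquivOfCommute c (commute_inl_inv_mul_inr hm) hinf).symm⟩, ?_⟩
  rw [index_Gk]
  omega
end

section
/- Let F be a finitely generated free group with basis f₁,...,fₙ, let α : ℤ → Aut(F), let π : Aut(F) → Out(F) be the quotient map, and let G = F ⋊_α ℤ. If π ∘ α has finite image, then G contains a finite-index subgroup isomorphic to F × ℤ. -/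
/-!
Since `π ∘ α` has finite image, some `t ≠ 0` acts on `F` as conjugation by some `m ∈ F`. Then
`z = (m⁻¹, t)` centralizes `F`, so `(x, k) ↦ x z^k` is a homomorphism `F × ℤ → G`. It is injective
because `z` projects to `t`, which has infinite order, and its image is the preimage of `⟨t⟩` under
`G → ℤ`, whose index is `|t|`.
-/

open SemidirectProduct

theorem exists_ne_one_map_mem_of_finite_range_mk {H A : Type*} [Group H] [Infinite H] [Group A]
    (S : Subgroup A) (φ : H →* A)
    (hfin : (Set.range fun b => (QuotientGroup.mk (φ b) : A ⧸ S)).Finite) :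
    ∃ t ≠ 1, φ t ∈ S := by
  have := hfin.to_subtype
  obtain ⟨a, c, hac, hsame⟩ :=
    Finite.exists_ne_map_eq_of_infinite (Set.rangeFactorization fun b => (φ b : A ⧸ S))
  refine ⟨a⁻¹ * c, by rwa [Ne, inv_mul_eq_one], ?_⟩
  rw [map_mul, map_inv]
  exact QuotientGroup.eq.mp (congrArg Subtype.val hsame)

theorem Multiplicative.index_zpowers_int (t : Multiplicative ℤ) :
    (Subgroup.zpowers t).index = t.toAdd.natAbs := by
  rw [← Int.index_zmultiples, ← AddSubgroup.index_toSubgroup]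
  rfl

namespace SemidirectProduct

variable {N H : Type*} [Group N] [Group H] {φ : H →* MulAut N} {m : N} {t : H}

theorem commute_inl_mk_inv_of_eq_conj (hφ : φ t = MulAut.conj m) (x : N) :
    Commute (inl x : N ⋊[φ] H) ⟨m⁻¹, t⟩ := by
  refine SemidirectProduct.ext ?_ ?_
  · simp [hφ, mul_assoc]
  · simp

def inlMulZPowersHom (hφ : φ t = MulAut.conj m) : N × Multiplicative ℤ →* N ⋊[φ] H :=
  MonoidHom.noncommCoprod inl (zpowersHom _ ⟨m⁻¹, t⟩) fun x k =>
    (commute_inl_mk_inv_of_eq_conj hφ x).zpow_right k.toAdd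

theorem inlMulZPowersHom_apply (hφ : φ t = MulAut.conj m) (p : N × Multiplicative ℤ) :
    inlMulZPowersHom hφ p = inl p.1 * ⟨m⁻¹, t⟩ ^ p.2.toAdd :=
  rfl

theorem rightHom_inlMulZPowersHom (hφ : φ t = MulAut.conj m) (p : N × Multiplicative ℤ) :
    rightHom (inlMulZPowersHom hφ p) = t ^ p.2.toAdd := by
  rw [inlMulZPowersHom_apply, map_mul, map_zpow, rightHom_inl, one_mul]
  rfl

theorem inlMulZPowersHom_injective (hφ : φ t = MulAut.conj m) (ht : ¬IsOfFinOrder t) :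
    Function.Injective (inlMulZPowersHom hφ) := by
  rw [injective_iff_map_eq_one]
  rintro ⟨x, k⟩ hp
  have hk : k = 1 := by
    have h_pow : t ^ k.toAdd = t ^ (0 : ℤ) := by
      rw [← rightHom_inlMulZPowersHom hφ (x, k), hp, map_one, zpow_zero]
    exact toAdd_eq_zero.mp (injective_zpow_iff_not_isOfFinOrder.mpr ht h_pow)
  have hx : x = 1 := inl_injective (by simpa [inlMulZPowersHom_apply, hk] using hp)
  simp [hx, hk]

theorem range_inlMulZPowersHom (hφ : φ t = MulAut.conj m) :
    (inlMulZPowersHom hφ).range = (Subgroup.zpowers t).comap rightHom := by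
  apply le_antisymm
  · rintro _ ⟨p, rfl⟩
    simp [rightHom_inlMulZPowersHom, Subgroup.zpow_mem_zpowers]
  · rintro g ⟨k, hk⟩
    have h_inl : g * (⟨m⁻¹, t⟩ ^ k)⁻¹ ∈ (inl : N →* N ⋊[φ] H).range := by
      rw [range_inl_eq_ker_rightHom, MonoidHom.mem_ker, map_mul, map_inv, map_zpow, ← hk]
      exact mul_inv_eq_one.mpr rfl
    obtain ⟨x, hx⟩ := h_inl
    exact ⟨(x, Multiplicative.ofAdd k), by simp [inlMulZPowersHom_apply, hx]⟩

end SemidirectProduct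

/-- If `π ∘ α : ℤ → Out(Fₙ)` has finite image (where `π : Aut(Fₙ) → Out(Fₙ)` is the
quotient by the inner automorphisms), then `Fₙ ⋊_α ℤ` contains a finite-index
subgroup isomorphic to `Fₙ × ℤ`. -/
theorem stmt_9 (n : ℕ) (φ : Multiplicative ℤ →* MulAut (FreeGroup (Fin n)))
    (hfin : (Set.range fun b : Multiplicative ℤ =>
        (QuotientGroup.mk (φ b) :
          MulAut (FreeGroup (Fin n)) ⧸
            (MulAut.conj :
              FreeGroup (Fin n) →* MulAut (FreeGroup (Fin n))).range)).Finite) :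
    ∃ K : Subgroup (FreeGroup (Fin n) ⋊[φ] Multiplicative ℤ),
      K.index ≠ 0 ∧ Nonempty (K ≃* FreeGroup (Fin n) × Multiplicative ℤ) := by
  obtain ⟨t, ht, m, hm⟩ := exists_ne_one_map_mem_of_finite_range_mk _ φ hfin
  have h_inf : ¬IsOfFinOrder t := (isOfFinOrder_iff_eq_one t).not.mpr ht
  refine ⟨(Subgroup.zpowers t).comap rightHom, ?_, ⟨?_⟩⟩
  · rw [Subgroup.index_comap_of_surjective _ rightHom_surjective,
      Multiplicative.index_zpowers_int]
    simpa using ht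
  · exact (MulEquiv.subgroupCongr (range_inlMulZPowersHom hm.symm)).symm.trans
      (MonoidHom.ofInjective (inlMulZPowersHom_injective hm.symm h_inf)).symm
end
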